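/- arXiv:2007.04213 — 3 statements merged into one kernel-verified Lean document; each statement's English description precedes it below -/
import Mathlib

section
/- Let X be a set with closure operator c : Set X → Set X (monotone, inflationary). Let p : ℕ → X be a 'path', i.e. p (n+1) ∈ c {p n} for all n, and let S, T ⊆ X. Suppose p is an escape route from S avoiding T, i.e.: (i) ∃ n, p n ∈ S; (ii) for every n with p n ∈ S there is m ≥ n with p m ∉ S; (iii) there is no n such that (∃ k ≤ n, p k ∈ S) ∧ (∃ m ≥ n, p m ∉ S) ∧ p n ∈ T. Suppose further W ⊆ S satisfies c(W) \ W ⊆ T. Then p⁻¹(W) = ∅. -/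
/-!
Were `p` ever to enter `W`, it would have to leave `W` again, since it leaves `S ⊇ W`. At the
step `k → k + 1` where it does so, `p (k + 1) ∈ c {p k} ⊆ c W`, so `p (k + 1)` lies in the
boundary `c W \ W ⊆ T`. But `p (k + 1)` comes after a visit to `S` and is followed by a point
outside `S`, which is exactly what an escape route avoiding `T` forbids.
-/

theorem Nat.exists_mem_and_succ_notMem {s : Set ℕ} {n m : ℕ} (hnm : n ≤ m) (hn : n ∈ s)
    (hm : m ∉ s) : ∃ k, n ≤ k ∧ k ∈ s ∧ k + 1 ∉ s := by
  induction m, hnm using Nat.le_induction with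
  | base => exact absurd hn hm
  | succ m hnm ih =>
    by_cases hms : m ∈ s
    · exact ⟨m, hnm, hms, hm⟩
    · exact ih hms

section ClosurePath

variable {X : Type*} {c : Set X → Set X} {p : ℕ → X}

theorem succ_mem_closure_of_mem (hmono : Monotone c) (hpath : ∀ n, p (n + 1) ∈ c {p n})
    {W : Set X} {k : ℕ} (hk : p k ∈ W) : p (k + 1) ∈ c W :=
  hmono (Set.singleton_subset_iff.2 hk) (hpath k)

theorem notMem_of_le_of_mem_of_escapes {S T : Set X}
    (h2 : ∀ n, p n ∈ S → ∃ m, n ≤ m ∧ p m ∉ S)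
    (h3 : ¬ ∃ n, (∃ k ≤ n, p k ∈ S) ∧ (∃ m, n ≤ m ∧ p m ∉ S) ∧ p n ∈ T)
    {k n : ℕ} (hkn : k ≤ n) (hk : p k ∈ S) : p n ∉ T := by
  intro hnT
  have hleaves : ∃ m, n ≤ m ∧ p m ∉ S := by
    by_cases hnS : p n ∈ S
    · exact h2 n hnS
    · exact ⟨n, le_rfl, hnS⟩
  exact h3 ⟨n, ⟨k, hkn, hk⟩, hleaves, hnT⟩

end ClosurePath

theorem escape_route_avoids_until_approximant_general {X : Type*}
    (c : Set X → Set X) (hmono : Monotone c)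
    (p : ℕ → X) (hpath : ∀ n, p (n + 1) ∈ c {p n})
    (S T : Set X)
    (h2 : ∀ n, p n ∈ S → ∃ m, n ≤ m ∧ p m ∉ S)
    (h3 : ¬ ∃ n, (∃ k ≤ n, p k ∈ S) ∧ (∃ m, n ≤ m ∧ p m ∉ S) ∧ p n ∈ T)
    (W : Set X) (hWS : W ⊆ S) (hWT : c W \ W ⊆ T) :
    p ⁻¹' W = ∅ := by
  refine Set.eq_empty_of_forall_notMem fun n hn => ?_
  obtain ⟨m, hnm, hmS⟩ := h2 n (hWS hn)
  obtain ⟨k, hnk, hkW, hk'W⟩ :=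
    Nat.exists_mem_and_succ_notMem (s := p ⁻¹' W) hnm hn fun hmW => hmS (hWS hmW)
  have hk'T : p (k + 1) ∈ T := hWT ⟨succ_mem_closure_of_mem hmono hpath hkW, hk'W⟩
  exact notMem_of_le_of_mem_of_escapes h2 h3 (hnk.trans k.le_succ) (hWS hn) hk'T

theorem escape_route_avoids_until_approximant {X : Type*}
    (c : Set X → Set X) (hmono : Monotone c) (hinfl : ∀ A : Set X, A ⊆ c A)
    (p : ℕ → X) (hpath : ∀ n, p (n + 1) ∈ c {p n})
    (S T : Set X)
    (h1 : ∃ n, p n ∈ S)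
    (h2 : ∀ n, p n ∈ S → ∃ m, n ≤ m ∧ p m ∉ S)
    (h3 : ¬ ∃ n, (∃ k ≤ n, p k ∈ S) ∧ (∃ m, n ≤ m ∧ p m ∉ S) ∧ p n ∈ T)
    (W : Set X) (hWS : W ⊆ S) (hWT : c W \ W ⊆ T) :
    p ⁻¹' W = ∅ :=
  escape_route_avoids_until_approximant_general c hmono p hpath S T h2 h3 W hWS hWT
end

section
/- Let X be a set with a monotone inflationary closure c : Set X → Set X, ℕ with the successor closure n(A) = {k+1 | k ∈ A}, S, T ⊆ X, and p : ℕ → X with p(k+1) ∈ c({p k}) for all k. If W ⊆ S with c(W) \ W ⊆ T, (∃ n, p n ∈ S), every n with p n ∈ S admits m ≥ n with p m ∉ S, and no n with p n ∈ T lies between an index in S and a later index outside S, then for every x ∈ W there is no n with p n = x; consequently x ∈ ⋃{W ⊆ S | c(W)\W ⊆ T} implies x ∉ range p, i.e. the until set S 𝔘 T is contained in the surrounded set Sur(S,T) := S ∩ ⋂_{p escape route} (range p)ᶜ. -/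
/-! A route through a point of `W ⊆ S` must leave `S`, hence `W`; the first step out of `W`
lands in `c W \ W ⊆ T`, at an index after a point of `S` and before a point outside `S`,
which an escape route avoiding `T` forbids. -/

theorem Nat.exists_ge_and_not_succ_of_le {P : ℕ → Prop} {n m : ℕ} (hn : P n) (hm : ¬ P m)
    (hnm : n ≤ m) : ∃ j, n ≤ j ∧ P j ∧ ¬ P (j + 1) := by
  induction m, hnm using Nat.le_induction with
  | base => exact absurd hn hm
  | succ m hnm ih =>
    by_cases hPm : P m
    · exact ⟨m, hnm, hPm, hm⟩
    · exact ih hPm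

theorem succ_mem_closure_diff_of_mem_of_not_mem {X : Type*} {c : Set X → Set X}
    (hmono : Monotone c) {p : ℕ → X} (hpath : ∀ k, p (k + 1) ∈ c {p k}) {W : Set X} {j : ℕ}
    (hj : p j ∈ W) (hj' : p (j + 1) ∉ W) : p (j + 1) ∈ c W \ W :=
  ⟨hmono (Set.singleton_subset_iff.mpr hj) (hpath j), hj'⟩

theorem until_subset_surrounded_general {X : Type*}
    (c : Set X → Set X) (hmono : Monotone c)
    (S T : Set X) (p : ℕ → X) (hpath : ∀ k, p (k + 1) ∈ c {p k})
    (h2 : ∀ n, p n ∈ S → ∃ m, n ≤ m ∧ p m ∉ S)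
    (h3 : ¬ ∃ n, (∃ k ≤ n, p k ∈ S) ∧ (∃ m, n ≤ m ∧ p m ∉ S) ∧ p n ∈ T) :
    (∀ W : Set X, W ⊆ S → c W \ W ⊆ T → ∀ x ∈ W, ¬ ∃ n, p n = x) ∧
    (∀ x ∈ ⋃₀ {W : Set X | W ⊆ S ∧ c W \ W ⊆ T}, x ∉ Set.range p) := by
  have avoids : ∀ W : Set X, W ⊆ S → c W \ W ⊆ T → ∀ x ∈ W, ¬ ∃ n, p n = x := by
    rintro W hWS hcW _ hxW ⟨n, rfl⟩
    obtain ⟨m, hnm, hmS⟩ := h2 n (hWS hxW)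
    obtain ⟨j, hnj, hjW, hj'W⟩ :=
      Nat.exists_ge_and_not_succ_of_le (P := (p · ∈ W)) hxW (fun h => hmS (hWS h)) hnm
    have hexit : p (j + 1) ∈ T :=
      hcW (succ_mem_closure_diff_of_mem_of_not_mem hmono hpath hjW hj'W)
    have hleave : ∃ m, j + 1 ≤ m ∧ p m ∉ S := by
      by_cases hS : p (j + 1) ∈ S
      · exact h2 _ hS
      · exact ⟨j + 1, le_rfl, hS⟩
    exact h3 ⟨j + 1, ⟨n, by omega, hWS hxW⟩, hleave, hexit⟩
  refine ⟨avoids, ?_⟩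
  rintro x ⟨W, ⟨hWS, hcW⟩, hxW⟩ hx
  exact avoids W hWS hcW x hxW hx

theorem until_subset_surrounded {X : Type*}
    (c : Set X → Set X) (hmono : Monotone c) (hinfl : ∀ A : Set X, A ⊆ c A)
    (S T : Set X) (p : ℕ → X) (hpath : ∀ k, p (k + 1) ∈ c {p k})
    (h1 : ∃ n, p n ∈ S)
    (h2 : ∀ n, p n ∈ S → ∃ m, n ≤ m ∧ p m ∉ S)
    (h3 : ¬ ∃ n, (∃ k ≤ n, p k ∈ S) ∧ (∃ m, n ≤ m ∧ p m ∉ S) ∧ p n ∈ T) :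
    (∀ W : Set X, W ⊆ S → c W \ W ⊆ T → ∀ x ∈ W, ¬ ∃ n, p n = x) ∧
    (∀ x ∈ ⋃₀ {W : Set X | W ⊆ S ∧ c W \ W ⊆ T}, x ∉ Set.range p) :=
  until_subset_surrounded_general c hmono S T p hpath h2 h3
end

section
/- Let f : A → B be a map of sets with fuzzy structures α : A → [0,1], β : B → [0,1] such that α x ≤ β (f x) for all x. For ξ : A → [0,1] with ξ ≤ α, define ∃_f(ξ) : B → [0,1] by ∃_f(ξ)(y) = ⨆_{x ∈ f⁻¹{y}} ξ x, and for ζ ≤ β define f*(ζ)(x) = min (α x) (ζ (f x)). Then ∃_f(ξ) ≤ β, f*(ζ) ≤ α, and the adjunction holds: ∃_f(ξ) ≤ ζ if and only if ξ ≤ f*(ζ). Moreover Frobenius reciprocity holds: ∃_f(f*(ζ) ⊓ ξ) = ζ ⊓ ∃_f(ξ) pointwise. -/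
/-! On the fibre over `y`, `fuzzyExists f ξ y` lies below every nonnegative upper bound of `ξ`
(an empty fibre gives `sSup ∅ = 0`) and above every value of `ξ`, the fibre being bounded by `β y`
since `ξ ≤ α ≤ β ∘ f`. This gives both bounds and the adjunction. For Frobenius, `ξ ≤ α` lets `α`
drop out of `min (min α (ζ ∘ f)) ξ`, and `sSup` commutes with the continuous monotone `min (ζ y)`. -/

/-- Existential image of a fuzzy subset along a function (values in [0,1] ⊆ ℝ,
with the supremum over an empty fiber equal to 0). -/
noncomputable def fuzzyExists {A B : Type*} (f : A → B) (ξ : A → ℝ) : B → ℝ :=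
  fun y => sSup (ξ '' (f ⁻¹' {y}))

section FuzzyExists

variable {A B : Type*} {f : A → B} {ξ : A → ℝ}

theorem fuzzyExists_le_of_forall_le {y : B} {c : ℝ} (hc : 0 ≤ c)
    (h : ∀ x, f x = y → ξ x ≤ c) : fuzzyExists f ξ y ≤ c :=
  Real.sSup_le (by rintro _ ⟨x, hx, rfl⟩; exact h x hx) hc

theorem bddAbove_image_fiber_of_le {β : B → ℝ} (h : ∀ x, ξ x ≤ β (f x)) (y : B) :
    BddAbove (ξ '' (f ⁻¹' {y})) :=
  ⟨β y, by rintro _ ⟨x, rfl, rfl⟩; exact h x⟩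

theorem le_fuzzyExists {x : A} (hbdd : BddAbove (ξ '' (f ⁻¹' {f x}))) :
    ξ x ≤ fuzzyExists f ξ (f x) :=
  le_csSup hbdd ⟨x, rfl, rfl⟩

theorem fuzzyExists_le_iff {ζ : B → ℝ} (hbdd : ∀ y, BddAbove (ξ '' (f ⁻¹' {y})))
    (hζ : ∀ y, 0 ≤ ζ y) : (∀ y, fuzzyExists f ξ y ≤ ζ y) ↔ ∀ x, ξ x ≤ ζ (f x) :=
  ⟨fun h _ => (le_fuzzyExists (hbdd _)).trans (h _),
    fun h y => fuzzyExists_le_of_forall_le (hζ y) fun x hx => hx ▸ h x⟩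

theorem fuzzyExists_min_comp {ζ : B → ℝ} {y : B} (hbdd : BddAbove (ξ '' (f ⁻¹' {y})))
    (hζ : 0 ≤ ζ y) :
    fuzzyExists f (fun x => min (ζ (f x)) (ξ x)) y = min (ζ y) (fuzzyExists f ξ y) := by
  rcases (f ⁻¹' {y}).eq_empty_or_nonempty with hempty | hne
  · simp [fuzzyExists, hempty, hζ]
  have himage : (fun x => min (ζ (f x)) (ξ x)) '' (f ⁻¹' {y}) =
      min (ζ y) '' (ξ '' (f ⁻¹' {y})) := by
    rw [← Set.image_comp]
    exact Set.image_congr fun x hx => by rw [show f x = y from hx]; rfl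
  rw [fuzzyExists, himage]
  exact ((monotone_const.min monotone_id).map_csSup_of_continuousAt
    (continuous_const.min continuous_id).continuousAt (hne.image ξ) hbdd).symm

end FuzzyExists

theorem fuzzy_existential_adjunction_frobenius_general {A B : Type*}
    (f : A → B) (α : A → ℝ) (β : B → ℝ)
    (hβ : ∀ y, β y ∈ Set.Icc (0 : ℝ) 1)
    (hαβ : ∀ x, α x ≤ β (f x))
    (ξ : A → ℝ) (hξα : ξ ≤ α)
    (ζ : B → ℝ) (hζ : ∀ y, ζ y ∈ Set.Icc (0 : ℝ) 1) :
    (∀ y, fuzzyExists f ξ y ≤ β y) ∧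
    (∀ x, min (α x) (ζ (f x)) ≤ α x) ∧
    ((∀ y, fuzzyExists f ξ y ≤ ζ y) ↔ ∀ x, ξ x ≤ min (α x) (ζ (f x))) ∧
    (∀ y, fuzzyExists f (fun x => min (min (α x) (ζ (f x))) (ξ x)) y =
      min (ζ y) (fuzzyExists f ξ y)) := by
  have hξβ : ∀ x, ξ x ≤ β (f x) := fun x => (hξα x).trans (hαβ x)
  have hbdd := bddAbove_image_fiber_of_le hξβ
  have hmin : (fun x => min (min (α x) (ζ (f x))) (ξ x)) = fun x => min (ζ (f x)) (ξ x) :=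
    funext fun x => by rw [min_comm (α x), min_assoc, min_eq_right (hξα x)]
  refine ⟨fun y => fuzzyExists_le_of_forall_le (hβ y).1 fun x hx => hx ▸ hξβ x,
    fun x => min_le_left _ _, ?_, fun y => ?_⟩
  · rw [fuzzyExists_le_iff hbdd fun y => (hζ y).1]
    exact forall_congr' fun x => (and_iff_right (hξα x)).symm.trans le_min_iff.symm
  · rw [hmin, fuzzyExists_min_comp (hbdd y) (hζ y).1]

theorem fuzzy_existential_adjunction_frobenius {A B : Type*}
    (f : A → B) (α : A → ℝ) (β : B → ℝ)
    (hα : ∀ x, α x ∈ Set.Icc (0 : ℝ) 1) (hβ : ∀ y, β y ∈ Set.Icc (0 : ℝ) 1)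
    (hαβ : ∀ x, α x ≤ β (f x))
    (ξ : A → ℝ) (hξ : ∀ x, ξ x ∈ Set.Icc (0 : ℝ) 1) (hξα : ξ ≤ α)
    (ζ : B → ℝ) (hζ : ∀ y, ζ y ∈ Set.Icc (0 : ℝ) 1) (hζβ : ζ ≤ β) :
    (∀ y, fuzzyExists f ξ y ≤ β y) ∧
    (∀ x, min (α x) (ζ (f x)) ≤ α x) ∧
    ((∀ y, fuzzyExists f ξ y ≤ ζ y) ↔ ∀ x, ξ x ≤ min (α x) (ζ (f x))) ∧
    (∀ y, fuzzyExists f (fun x => min (min (α x) (ζ (f x))) (ξ x)) y =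
      min (ζ y) (fuzzyExists f ξ y)) :=
  fuzzy_existential_adjunction_frobenius_general f α β hβ hαβ ξ hξα ζ hζ
end
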